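/- For any measurable set A ⊆ R^n and any η > 0, λ > 0, the set A_λ^{[η]} = {x ∈ R^n : γ(A ∩ B)/γ(B) ≥ η for every ball B = B(x, r) with 0 < r ≤ λ·m(x)} is a closed subset of R^n contained in the closure of A. -/
import Mathlib


open MeasureTheory Metric Set ENNReal

noncomputable def mCut {n : ℕ} (x : EuclideanSpace ℝ (Fin n)) : ℝ :=
  if ‖x‖ ≤ 1 then 1 else 1 / ‖x‖

noncomputable def gaussM (n : ℕ) : Measure (EuclideanSpace ℝ (Fin n)) :=
  volume.withDensity fun y => ENNReal.ofReal (Real.exp (-‖y‖ ^ 2))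

noncomputable def dtt : Measure ℝ :=
  (volume.restrict (Set.Ioi (0 : ℝ))).withDensity fun t => ENNReal.ofReal (1 / t)

noncomputable def tentMeasure (n : ℕ) : Measure (EuclideanSpace ℝ (Fin n) × ℝ) :=
  (gaussM n).prod dtt

def gaussCone {n : ℕ} (α β : ℝ) (x : EuclideanSpace ℝ (Fin n)) :
    Set (EuclideanSpace ℝ (Fin n) × ℝ) :=
  {p | 0 < p.2 ∧ dist p.1 x < min (α * p.2) (β * mCut p.1)}

def gaussTent {n : ℕ} (α β : ℝ) (B : Set (EuclideanSpace ℝ (Fin n))) :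
    Set (EuclideanSpace ℝ (Fin n) × ℝ) :=
  {p | 0 < p.2 ∧ min (α * p.2) (β * mCut p.1) ≤ Metric.infDist p.1 Bᶜ}

noncomputable def areaS {n : ℕ} (q α β : ℝ) (f : EuclideanSpace ℝ (Fin n) × ℝ → ℝ)
    (x : EuclideanSpace ℝ (Fin n)) : ℝ≥0∞ :=
  (∫⁻ p in gaussCone α β x,
      ENNReal.ofReal (|f p| ^ q) /
        gaussM n (Metric.ball p.1 (min (α * p.2) (β * mCut p.1))) ∂ tentMeasure n) ^ (1 / q)

noncomputable def areaSInf {n : ℕ} (α β : ℝ) (f : EuclideanSpace ℝ (Fin n) × ℝ → ℝ)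
    (x : EuclideanSpace ℝ (Fin n)) : ℝ≥0∞ :=
  ⨆ p ∈ gaussCone α β x, ENNReal.ofReal |f p|


section Aux

open Filter Real Topology

variable {n : ℕ}

lemma mCut_eq (x : EuclideanSpace ℝ (Fin n)) : mCut x = (max 1 ‖x‖)⁻¹ := by
  unfold mCut
  split_ifs with h
  · rw [max_eq_left h, inv_one]
  · rw [max_eq_right (not_le.1 h).le, one_div]

lemma mCut_pos (x : EuclideanSpace ℝ (Fin n)) : 0 < mCut x := by
  rw [mCut_eq]
  exact inv_pos.2 (lt_of_lt_of_le one_pos (le_max_left _ _))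

lemma continuous_mCut : Continuous (mCut (n := n)) := by
  have : (mCut (n := n)) = fun x => (max 1 ‖x‖)⁻¹ := funext mCut_eq
  rw [this]
  exact (continuous_const.max continuous_norm).inv₀ fun x =>
    (lt_of_lt_of_le one_pos (le_max_left _ _)).ne'

lemma gaussM_ball_lt_top (x : EuclideanSpace ℝ (Fin n)) (r : ℝ) :
    gaussM n (Metric.ball x r) < ∞ := by
  rw [gaussM, withDensity_apply _ measurableSet_ball]
  calc ∫⁻ y in Metric.ball x r, ENNReal.ofReal (Real.exp (-‖y‖ ^ 2)) ∂volume
      ≤ ∫⁻ _ in Metric.ball x r, 1 ∂volume := by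
        refine lintegral_mono fun y => ?_
        rw [ENNReal.ofReal_le_one, Real.exp_le_one_iff]
        simpa using sq_nonneg ‖y‖
    _ = volume (Metric.ball x r) := by simp
    _ < ∞ := measure_ball_lt_top

lemma gaussM_ball_pos (x : EuclideanSpace ℝ (Fin n)) {r : ℝ} (hr : 0 < r) :
    0 < gaussM n (Metric.ball x r) := by
  rw [gaussM, withDensity_apply _ measurableSet_ball]
  have hle : ∫⁻ _ in Metric.ball x r, ENNReal.ofReal (Real.exp (-(‖x‖ + r) ^ 2)) ∂volume
      ≤ ∫⁻ y in Metric.ball x r, ENNReal.ofReal (Real.exp (-‖y‖ ^ 2)) ∂volume := by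
    refine setLIntegral_mono (by measurability) fun y hy => ?_
    refine ENNReal.ofReal_le_ofReal (Real.exp_le_exp.2 (neg_le_neg ?_))
    have hy' : ‖y‖ ≤ ‖x‖ + r := by
      have := mem_ball_iff_norm.1 hy
      calc ‖y‖ = ‖x + (y - x)‖ := by rw [add_sub_cancel]
        _ ≤ ‖x‖ + ‖y - x‖ := norm_add_le _ _
        _ ≤ ‖x‖ + r := by linarith
    exact pow_le_pow_left₀ (norm_nonneg y) hy' 2
  refine lt_of_lt_of_le ?_ hle
  rw [setLIntegral_const]
  exact ENNReal.mul_pos (ENNReal.ofReal_pos.2 (Real.exp_pos _)).ne'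
    (measure_ball_pos volume x hr).ne'

lemma gaussM_sphere (x : EuclideanSpace ℝ (Fin n)) {r : ℝ} (hr : r ≠ 0) :
    gaussM n (Metric.sphere x r) = 0 :=
  (withDensity_absolutelyContinuous _ _)
    (Measure.addHaar_sphere_of_ne_zero (μ := volume) x hr)

lemma tendsto_gaussM_radius (E : Set (EuclideanSpace ℝ (Fin n))) (hE : MeasurableSet E)
    (p : EuclideanSpace ℝ (Fin n)) {R : ℝ} (hR : 0 < R) :
    Tendsto (fun s : ℝ => gaussM n (E ∩ Metric.ball p s)) (𝓝 R)
      (𝓝 (gaussM n (E ∩ Metric.ball p R))) := by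
  rw [tendsto_order]
  constructor
  · intro a ha
    have hmono : Monotone fun k : ℕ => E ∩ Metric.ball p (R - 1 / (k + 1)) := by
      intro i j hij
      have hij' : (i : ℝ) ≤ j := Nat.cast_le.2 hij
      have h1 : (1 : ℝ) / (j + 1) ≤ 1 / (i + 1) :=
        one_div_le_one_div_of_le (by positivity) (by linarith)
      exact inter_subset_inter_right _ (Metric.ball_subset_ball (by linarith))
    have hU : (⋃ k : ℕ, E ∩ Metric.ball p (R - 1 / (k + 1))) = E ∩ Metric.ball p R := by
      apply Subset.antisymm
      · refine iUnion_subset fun k => inter_subset_inter_right _ (Metric.ball_subset_ball ?_)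
        have : (0 : ℝ) < 1 / (k + 1) := by positivity
        linarith
      · rintro y ⟨hyE, hy⟩
        have hy' : dist y p < R := mem_ball.1 hy
        obtain ⟨k, hk⟩ := exists_nat_one_div_lt (show (0:ℝ) < R - dist y p by linarith)
        exact mem_iUnion.2 ⟨k, hyE, mem_ball.2 (by push_cast; push_cast at hk; linarith)⟩
    have hT := tendsto_measure_iUnion_atTop (μ := gaussM n)
      (s := fun k : ℕ => E ∩ Metric.ball p (R - 1 / (k + 1))) hmono
    rw [hU] at hT
    obtain ⟨k, hk⟩ := (hT.eventually (eventually_gt_nhds ha)).exists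
    have hlt : R - 1 / (k + 1 : ℝ) < R := by
      have : (0 : ℝ) < 1 / (k + 1) := by positivity
      linarith
    filter_upwards [eventually_gt_nhds hlt] with s hs
    exact lt_of_lt_of_le hk (measure_mono
      (inter_subset_inter_right _ (Metric.ball_subset_ball hs.le)))
  · intro a ha
    have hanti : Antitone fun k : ℕ => E ∩ Metric.ball p (R + 1 / (k + 1)) := by
      intro i j hij
      have hij' : (i : ℝ) ≤ j := Nat.cast_le.2 hij
      have h1 : (1 : ℝ) / (j + 1) ≤ 1 / (i + 1) :=
        one_div_le_one_div_of_le (by positivity) (by linarith)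
      exact inter_subset_inter_right _ (Metric.ball_subset_ball (by linarith))
    have hT := tendsto_measure_iInter_atTop (μ := gaussM n)
      (s := fun k : ℕ => E ∩ Metric.ball p (R + 1 / (k + 1)))
      (fun k => (hE.inter measurableSet_ball).nullMeasurableSet) hanti
      ⟨0, ((measure_mono inter_subset_right).trans_lt (gaussM_ball_lt_top p _)).ne⟩
    have hI : (⋂ k : ℕ, E ∩ Metric.ball p (R + 1 / (k + 1))) = E ∩ Metric.closedBall p R := by
      apply Subset.antisymm
      · intro y hy
        have hyE : y ∈ E := (mem_iInter.1 hy 0).1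
        refine ⟨hyE, mem_closedBall.2 ?_⟩
        by_contra hc
        push_neg at hc
        obtain ⟨k, hk⟩ := exists_nat_one_div_lt (show (0:ℝ) < dist y p - R by linarith)
        have := mem_ball.1 (mem_iInter.1 hy k).2
        push_cast at hk
        linarith
      · refine fun y hy => mem_iInter.2 fun k => ⟨hy.1, mem_ball.2 ?_⟩
        have h1 := mem_closedBall.1 hy.2
        have : (0 : ℝ) < 1 / (k + 1) := by positivity
        linarith
    have hcb : gaussM n (E ∩ Metric.closedBall p R) = gaussM n (E ∩ Metric.ball p R) := by
      refine le_antisymm ?_ (measure_mono (inter_subset_inter_right _ Metric.ball_subset_closedBall))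
      calc gaussM n (E ∩ Metric.closedBall p R)
          ≤ gaussM n ((E ∩ Metric.ball p R) ∪ Metric.sphere p R) := by
            refine measure_mono fun y hy => ?_
            rcases lt_or_eq_of_le (mem_closedBall.1 hy.2) with h | h
            · exact Or.inl ⟨hy.1, mem_ball.2 h⟩
            · exact Or.inr (mem_sphere.2 h)
        _ ≤ gaussM n (E ∩ Metric.ball p R) + gaussM n (Metric.sphere p R) := measure_union_le _ _
        _ = gaussM n (E ∩ Metric.ball p R) := by rw [gaussM_sphere p hR.ne', add_zero]
    rw [hI, hcb] at hT
    obtain ⟨k, hk⟩ := (hT.eventually (eventually_lt_nhds ha)).exists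
    have hlt : R < R + 1 / (k + 1 : ℝ) := by
      have : (0 : ℝ) < 1 / (k + 1) := by positivity
      linarith
    filter_upwards [eventually_lt_nhds hlt] with s hs
    exact lt_of_le_of_lt (measure_mono
      (inter_subset_inter_right _ (Metric.ball_subset_ball hs.le))) hk

lemma tendsto_gaussM_ball (E : Set (EuclideanSpace ℝ (Fin n))) (hE : MeasurableSet E)
    (p : EuclideanSpace ℝ (Fin n)) {R : ℝ} (hR : 0 < R)
    (x : ℕ → EuclideanSpace ℝ (Fin n)) (r : ℕ → ℝ)
    (hx : Tendsto x atTop (𝓝 p)) (hr : Tendsto r atTop (𝓝 R)) :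
    Tendsto (fun k => gaussM n (E ∩ Metric.ball (x k) (r k))) atTop
      (𝓝 (gaussM n (E ∩ Metric.ball p R))) := by
  set d : ℕ → ℝ := fun k => dist (x k) p + |r k - R| with hd
  have hd0 : Tendsto d atTop (𝓝 0) := by
    have h1 : Tendsto (fun k => dist (x k) p) atTop (𝓝 0) :=
      tendsto_iff_dist_tendsto_zero.1 hx
    have h2 : Tendsto (fun k => |r k - R|) atTop (𝓝 0) := by
      have := (hr.sub (tendsto_const_nhds (x := R) (f := atTop (α := ℕ)))).abs
      simpa using this
    simpa using h1.add h2
  have hlow : ∀ k, gaussM n (E ∩ Metric.ball p (R - d k))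
      ≤ gaussM n (E ∩ Metric.ball (x k) (r k)) := by
    intro k
    refine measure_mono (inter_subset_inter_right _ fun y hy => mem_ball.2 ?_)
    have h1 : dist y p < R - d k := mem_ball.1 hy
    have h2 : dist y (x k) ≤ dist y p + dist p (x k) := dist_triangle _ _ _
    have h3 : dist p (x k) = dist (x k) p := dist_comm _ _
    have h4 : R - r k ≤ |r k - R| := by rw [abs_sub_comm]; exact le_abs_self _
    simp only [hd] at h1
    linarith
  have hhigh : ∀ k, gaussM n (E ∩ Metric.ball (x k) (r k))
      ≤ gaussM n (E ∩ Metric.ball p (R + d k)) := by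
    intro k
    refine measure_mono (inter_subset_inter_right _ fun y hy => mem_ball.2 ?_)
    have h1 : dist y (x k) < r k := mem_ball.1 hy
    have h2 : dist y p ≤ dist y (x k) + dist (x k) p := dist_triangle _ _ _
    have h4 : r k - R ≤ |r k - R| := le_abs_self _
    simp only [hd]
    linarith
  have hcont := tendsto_gaussM_radius E hE p hR
  have hTlow : Tendsto (fun k => gaussM n (E ∩ Metric.ball p (R - d k))) atTop
      (𝓝 (gaussM n (E ∩ Metric.ball p R))) := by
    refine hcont.comp ?_
    have := tendsto_const_nhds (x := R) (f := atTop (α := ℕ)) |>.sub hd0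
    simpa using this
  have hThigh : Tendsto (fun k => gaussM n (E ∩ Metric.ball p (R + d k))) atTop
      (𝓝 (gaussM n (E ∩ Metric.ball p R))) := by
    refine hcont.comp ?_
    have := tendsto_const_nhds (x := R) (f := atTop (α := ℕ)) |>.add hd0
    simpa using this
  exact tendsto_of_tendsto_of_tendsto_of_le_of_le hTlow hThigh hlow hhigh

end Aux

theorem stmt5 {n : ℕ} (A : Set (EuclideanSpace ℝ (Fin n))) (hA : MeasurableSet A)
    (η lam : ℝ) (hη : 0 < η) (hlam : 0 < lam) :
    IsClosed {x : EuclideanSpace ℝ (Fin n) | ∀ r : ℝ, 0 < r → r ≤ lam * mCut x →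
        ENNReal.ofReal η * gaussM n (Metric.ball x r) ≤ gaussM n (A ∩ Metric.ball x r)} ∧
      {x : EuclideanSpace ℝ (Fin n) | ∀ r : ℝ, 0 < r → r ≤ lam * mCut x →
        ENNReal.ofReal η * gaussM n (Metric.ball x r) ≤ gaussM n (A ∩ Metric.ball x r)}
        ⊆ closure A := by
  have hS : ∀ (x : ℕ → EuclideanSpace ℝ (Fin n)) (p : EuclideanSpace ℝ (Fin n)),
      (∀ k, x k ∈ {x : EuclideanSpace ℝ (Fin n) | ∀ r : ℝ, 0 < r → r ≤ lam * mCut x →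
        ENNReal.ofReal η * gaussM n (Metric.ball x r) ≤ gaussM n (A ∩ Metric.ball x r)}) →
      Filter.Tendsto x Filter.atTop (nhds p) →
      p ∈ {x : EuclideanSpace ℝ (Fin n) | ∀ r : ℝ, 0 < r → r ≤ lam * mCut x →
        ENNReal.ofReal η * gaussM n (Metric.ball x r) ≤ gaussM n (A ∩ Metric.ball x r)} := by
    intro x p hx hxp r hr hrle
    set rk : ℕ → ℝ := fun k => min r (lam * mCut (x k)) with hrk_def
    have h1 : ∀ k, 0 < rk k := fun k => lt_min hr (mul_pos hlam (mCut_pos _))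
    have h2 : ∀ k, rk k ≤ lam * mCut (x k) := fun k => min_le_right _ _
    have hk : ∀ k, ENNReal.ofReal η * gaussM n (Metric.ball (x k) (rk k))
        ≤ gaussM n (A ∩ Metric.ball (x k) (rk k)) := fun k => hx k (rk k) (h1 k) (h2 k)
    have hrk : Filter.Tendsto rk Filter.atTop (nhds r) := by
      have hm : Filter.Tendsto (fun k => lam * mCut (x k)) Filter.atTop
          (nhds (lam * mCut p)) :=
        (((continuous_mCut.tendsto p).comp hxp).const_mul lam)
      have := (tendsto_const_nhds (x := r) (f := Filter.atTop (α := ℕ))).min hm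
      rwa [min_eq_left hrle] at this
    have T1 := tendsto_gaussM_ball A hA p hr x rk hxp hrk
    have T2 := tendsto_gaussM_ball Set.univ MeasurableSet.univ p hr x rk hxp hrk
    simp only [Set.univ_inter] at T2
    have T2' : Filter.Tendsto (fun k => ENNReal.ofReal η * gaussM n (Metric.ball (x k) (rk k)))
        Filter.atTop (nhds (ENNReal.ofReal η * gaussM n (Metric.ball p r))) :=
      ENNReal.Tendsto.const_mul T2 (Or.inr ENNReal.ofReal_ne_top)
    exact le_of_tendsto_of_tendsto' T2' T1 hk
  constructor
  · exact IsSeqClosed.isClosed fun x p hxp hp => hS x p hxp hp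
  · intro x hx
    rw [Metric.mem_closure_iff]
    intro ε hε
    have hr : 0 < min ε (lam * mCut x) := lt_min hε (mul_pos hlam (mCut_pos x))
    have hineq := hx (min ε (lam * mCut x)) hr (min_le_right _ _)
    have hpos : 0 < gaussM n (A ∩ Metric.ball x (min ε (lam * mCut x))) :=
      lt_of_lt_of_le (ENNReal.mul_pos (by simpa using hη) (gaussM_ball_pos x hr).ne') hineq
    obtain ⟨y, hyA, hy⟩ := MeasureTheory.nonempty_of_measure_ne_zero hpos.ne'
    refine ⟨y, hyA, ?_⟩
    rw [dist_comm]
    exact lt_of_lt_of_le (mem_ball.1 hy) (min_le_left _ _)
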